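/- (In-sample soft policy improvement) Let π be a policy with π ⪯ β and let q̃^π : S × A → ℝ satisfy q̃^π = T^π q̃^π. Define the improved policy π'(a|s) = exp(q̃^π(s,a)/τ) / Σ_{a' ∈ supp β(·|s)} exp(q̃^π(s,a')/τ) for a ∈ supp β(·|s) and π'(a|s) = 0 otherwise, and let q̃^{π'} satisfy q̃^{π'} = T^{π'} q̃^{π'}. Then π' ⪯ β and q̃^{π'}(s,a) ≥ q̃^π(s,a) for all (s,a) ∈ S × A. -/

import Mathlib

open Finset

/-- The on-policy entropy-regularized Bellman operator
`(T^π q)(s,a) = r(s,a) + γ ∑_{s'} P(s,a)(s') ∑_{a' ∈ supp π(·|s')} π(a'|s')(q(s',a') − τ log π(a'|s'))`. -/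
noncomputable def Ton {S A : Type*} [Fintype S] [Fintype A]
    (r : S → A → ℝ) (γ τ : ℝ) (P : S → A → S → ℝ) (π : S → A → ℝ)
    (q : S → A → ℝ) : S → A → ℝ := fun s a =>
  r s a + γ * ∑ s', P s a s' *
    (∑ a' ∈ Finset.univ.filter (fun a' => 0 < π s' a'),
      π s' a' * (q s' a' - τ * Real.log (π s' a')))

/-!
Gibbs' variational principle says that among distributions supported in `supp β(·|s)`, the
soft value `E_w[q(s,·) − τ log w]` is maximized by the in-sample softmax of `q(s,·)/τ`, with
maximum `τ log Σ_{supp β} exp(q/τ)`. Since `supp π ⊆ supp β`, this gives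
`q̃^π = T^π q̃^π ≤ T^{π'} q̃^π`. The operator `T^{π'}` is monotone and a `γ`-contraction from
below, so the minimum `m` of `q̃^{π'} − q̃^π` satisfies `m ≥ γ m`, whence `m ≥ 0`.
-/

lemma exists_pos_of_sum_eq_one {ι : Type*} [Fintype ι] {w : ι → ℝ} (hw1 : ∑ i, w i = 1) :
    ∃ i, 0 < w i := by
  obtain ⟨i, -, hi⟩ := exists_lt_of_sum_lt (s := univ) (f := fun _ => (0 : ℝ)) (g := w)
    (by simp [hw1])
  exact ⟨i, hi⟩

lemma sum_filter_pos_eq_one {ι : Type*} [Fintype ι] {w : ι → ℝ} (hw0 : ∀ i, 0 ≤ w i)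
    (hw1 : ∑ i, w i = 1) : ∑ i ∈ univ.filter (fun i => 0 < w i), w i = 1 := by
  rw [sum_filter_of_ne fun i _ hi => (hw0 i).lt_of_ne' hi, hw1]

lemma le_sum_mul_of_forall_le {ι : Type*} {s : Finset ι} {w f : ι → ℝ} {m : ℝ}
    (hw0 : ∀ i ∈ s, 0 ≤ w i) (hw1 : ∑ i ∈ s, w i = 1) (h : ∀ i ∈ s, m ≤ f i) :
    m ≤ ∑ i ∈ s, w i * f i :=
  calc m = ∑ i ∈ s, w i * m := by rw [← sum_mul, hw1, one_mul]
    _ ≤ ∑ i ∈ s, w i * f i := sum_le_sum fun i hi => mul_le_mul_of_nonneg_left (h i hi) (hw0 i hi)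

section SoftValue

open Real

variable {A : Type*} [Fintype A]

lemma sum_filter_exp_pos {p : A → Prop} [DecidablePred p] {τ : ℝ} {x : A → ℝ} (hp : ∃ a, p a) :
    0 < ∑ a ∈ univ.filter p, exp (x a / τ) :=
  let ⟨a₀, ha₀⟩ := hp
  sum_pos' (fun _ _ => (exp_pos _).le) ⟨a₀, mem_filter.2 ⟨mem_univ _, ha₀⟩, exp_pos _⟩

/-- The inner sum of `Ton`: the soft state value `E_{a∼w}[x a − τ log w a]`. -/
noncomputable def softValue (τ : ℝ) (w x : A → ℝ) : ℝ :=
  ∑ a ∈ univ.filter (fun a => 0 < w a), w a * (x a - τ * log (w a))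

lemma softValue_sub_softValue (τ : ℝ) (w x y : A → ℝ) :
    softValue τ w y - softValue τ w x =
      ∑ a ∈ univ.filter (fun a => 0 < w a), w a * (y a - x a) := by
  rw [softValue, softValue, ← sum_sub_distrib]
  exact sum_congr rfl fun a _ => by ring

lemma softValue_le_log_sum_exp {τ : ℝ} (hτ : 0 < τ) {w : A → ℝ} (x : A → ℝ)
    (hw0 : ∀ a, 0 ≤ w a) (hw1 : ∑ a, w a = 1) {F : Finset A} (hF : ∀ a, 0 < w a → a ∈ F) :
    softValue τ w x ≤ τ * log (∑ a ∈ F, exp (x a / τ)) := by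
  set T := univ.filter (fun a => 0 < w a)
  have hwT : ∀ a ∈ T, 0 < w a := fun a ha => (mem_filter.1 ha).2
  have hT : 0 < ∑ a ∈ T, exp (x a / τ) := sum_filter_exp_pos (exists_pos_of_sum_eq_one hw1)
  calc softValue τ w x = τ * ∑ a ∈ T, w a • log (exp (x a / τ) / w a) := by
        rw [softValue, mul_sum]
        refine sum_congr rfl fun a ha => ?_
        rw [log_div (exp_ne_zero _) (hwT a ha).ne', log_exp, smul_eq_mul]
        field_simp
    _ ≤ τ * log (∑ a ∈ T, w a • (exp (x a / τ) / w a)) := by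
        gcongr
        exact strictConcaveOn_log_Ioi.concaveOn.le_map_sum (fun a ha => (hwT a ha).le)
          (sum_filter_pos_eq_one hw0 hw1) fun a ha => div_pos (exp_pos _) (hwT a ha)
    _ = τ * log (∑ a ∈ T, exp (x a / τ)) := by
        congr 2
        exact sum_congr rfl fun a ha => mul_div_cancel₀ _ (hwT a ha).ne'
    _ ≤ τ * log (∑ a ∈ F, exp (x a / τ)) := by
        gcongr
        exact fun a ha => hF a (hwT a ha)

noncomputable def softmaxOn (p : A → Prop) [DecidablePred p] (τ : ℝ) (x : A → ℝ) (a : A) : ℝ :=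
  if p a then exp (x a / τ) / ∑ a' ∈ univ.filter p, exp (x a' / τ) else 0

variable {p : A → Prop} [DecidablePred p] {τ : ℝ} {x : A → ℝ}

lemma softmaxOn_nonneg (a : A) : 0 ≤ softmaxOn p τ x a := by
  unfold softmaxOn
  split_ifs <;> positivity

lemma softmaxOn_pos_iff (hp : ∃ a, p a) {a : A} : 0 < softmaxOn p τ x a ↔ p a := by
  have hZ := sum_filter_exp_pos (τ := τ) (x := x) hp
  unfold softmaxOn
  split_ifs with ha
  · exact iff_of_true (div_pos (exp_pos _) hZ) ha
  · exact iff_of_false (lt_irrefl 0) ha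

lemma sum_softmaxOn (hp : ∃ a, p a) : ∑ a, softmaxOn p τ x a = 1 := by
  have hZ := sum_filter_exp_pos (τ := τ) (x := x) hp
  simp only [softmaxOn]
  rw [sum_ite, sum_const_zero, add_zero, ← sum_div, div_self hZ.ne']

lemma softValue_softmaxOn (hτ : τ ≠ 0) (hp : ∃ a, p a) :
    softValue τ (softmaxOn p τ x) x = τ * log (∑ a ∈ univ.filter p, exp (x a / τ)) := by
  have hZ := sum_filter_exp_pos (τ := τ) (x := x) hp
  rw [softValue, ← one_mul (τ * log _),
    ← sum_filter_pos_eq_one softmaxOn_nonneg (sum_softmaxOn (τ := τ) (x := x) hp), sum_mul]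
  refine sum_congr rfl fun a ha => ?_
  have hpa : p a := (softmaxOn_pos_iff hp).1 (mem_filter.1 ha).2
  simp only [softmaxOn, if_pos hpa]
  rw [log_div (exp_ne_zero _) hZ.ne', log_exp]
  field_simp
  ring

end SoftValue

section Bellman

variable {S A : Type*} [Fintype S] [Fintype A] {r : S → A → ℝ} {γ τ : ℝ} {P : S → A → S → ℝ}

lemma Ton_apply (π q : S → A → ℝ) (s : S) (a : A) :
    Ton r γ τ P π q s a = r s a + γ * ∑ s', P s a s' * softValue τ (π s') (q s') :=
  rfl

lemma Ton_le_Ton_of_softValue_le (hγ0 : 0 ≤ γ) (hP0 : ∀ s a s', 0 ≤ P s a s')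
    {π π' q : S → A → ℝ} (h : ∀ s, softValue τ (π s) (q s) ≤ softValue τ (π' s) (q s))
    (s : S) (a : A) : Ton r γ τ P π q s a ≤ Ton r γ τ P π' q s a := by
  rw [Ton_apply, Ton_apply]
  gcongr with s'
  · exact hP0 s a s'
  · exact h s'

lemma mul_le_Ton_sub_Ton (hγ0 : 0 ≤ γ) (hP0 : ∀ s a s', 0 ≤ P s a s')
    (hP1 : ∀ s a, ∑ s', P s a s' = 1) {π : S → A → ℝ} (hπ0 : ∀ s a, 0 ≤ π s a)
    (hπ1 : ∀ s, ∑ a, π s a = 1) {q q' : S → A → ℝ} {m : ℝ} (h : ∀ s a, m ≤ q' s a - q s a)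
    (s : S) (a : A) : γ * m ≤ Ton r γ τ P π q' s a - Ton r γ τ P π q s a := by
  rw [Ton_apply, Ton_apply, add_sub_add_left_eq_sub, ← mul_sub, ← sum_sub_distrib]
  simp only [← mul_sub]
  refine mul_le_mul_of_nonneg_left ?_ hγ0
  refine le_sum_mul_of_forall_le (fun s' _ => hP0 s a s') (hP1 s a) fun s' _ => ?_
  rw [softValue_sub_softValue]
  exact le_sum_mul_of_forall_le (fun a' ha' => (mem_filter.1 ha').2.le)
    (sum_filter_pos_eq_one (hπ0 s') (hπ1 s')) fun a' _ => h s' a'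

lemma le_of_le_Ton_of_eq_Ton (hγ0 : 0 ≤ γ) (hγ1 : γ < 1) (hP0 : ∀ s a s', 0 ≤ P s a s')
    (hP1 : ∀ s a, ∑ s', P s a s' = 1) {π : S → A → ℝ} (hπ0 : ∀ s a, 0 ≤ π s a)
    (hπ1 : ∀ s, ∑ a, π s a = 1) {q q' : S → A → ℝ} (hq : ∀ s a, q s a ≤ Ton r γ τ P π q s a)
    (hq' : q' = Ton r γ τ P π q') (s : S) (a : A) : q s a ≤ q' s a := by
  by_contra! hlt
  obtain ⟨p₀, -, hmin⟩ := exists_min_image univ (fun p : S × A => q' p.1 p.2 - q p.1 p.2)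
    ⟨(s, a), mem_univ _⟩
  have hm : ∀ s a, q' p₀.1 p₀.2 - q p₀.1 p₀.2 ≤ q' s a - q s a :=
    fun s a => hmin (s, a) (mem_univ _)
  have hcontr := mul_le_Ton_sub_Ton (r := r) (τ := τ) hγ0 hP0 hP1 hπ0 hπ1 hm p₀.1 p₀.2
  rw [← hq'] at hcontr
  nlinarith [hq p₀.1 p₀.2, hm s a]

end Bellman

theorem insample_soft_policy_improvement_general {S A : Type*}
    [Fintype S] [Fintype A]
    (r : S → A → ℝ) (γ : ℝ) (hγ0 : 0 ≤ γ) (hγ1 : γ < 1)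
    (P : S → A → S → ℝ) (hP0 : ∀ s a s', 0 ≤ P s a s') (hP1 : ∀ s a, (∑ s', P s a s') = 1)
    (τ : ℝ) (hτ : 0 < τ)
    (β : S → A → ℝ)
    (π : S → A → ℝ) (hπ0 : ∀ s a, 0 ≤ π s a) (hπ1 : ∀ s, (∑ a, π s a) = 1)
    (hsub : ∀ s a, 0 < π s a → 0 < β s a)
    (qpi : S → A → ℝ) (hqpi : qpi = Ton r γ τ P π qpi) :
    let pi' : S → A → ℝ := fun s a =>
      if 0 < β s a then
        Real.exp (qpi s a / τ) /
          ∑ a' ∈ Finset.univ.filter (fun a' => 0 < β s a'), Real.exp (qpi s a' / τ)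
      else 0
    (∀ s a, 0 < pi' s a → 0 < β s a) ∧
    (∀ qpi' : S → A → ℝ, qpi' = Ton r γ τ P pi' qpi' →
      ∀ s a, qpi s a ≤ qpi' s a) := by
  intro pi'
  have hpi' : pi' = fun s => softmaxOn (fun a => 0 < β s a) τ (qpi s) := rfl
  have hβ : ∀ s, ∃ a, 0 < β s a := fun s =>
    (exists_pos_of_sum_eq_one (hπ1 s)).imp (hsub s)
  have hgreedy : ∀ s, softValue τ (π s) (qpi s) ≤ softValue τ (pi' s) (qpi s) := fun s => by
    rw [hpi', softValue_softmaxOn hτ.ne' (hβ s)]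
    exact softValue_le_log_sum_exp hτ (qpi s) (hπ0 s) (hπ1 s) fun a ha =>
      mem_filter.2 ⟨mem_univ a, hsub s a ha⟩
  refine ⟨fun s a => (softmaxOn_pos_iff (hβ s)).1, fun qpi' hqpi' => ?_⟩
  refine le_of_le_Ton_of_eq_Ton hγ0 hγ1 hP0 hP1 (fun s => softmaxOn_nonneg)
    (fun s => sum_softmaxOn (hβ s)) (fun s a => ?_) hqpi'
  calc qpi s a = Ton r γ τ P π qpi s a := congr_fun₂ hqpi s a
    _ ≤ Ton r γ τ P pi' qpi s a := Ton_le_Ton_of_softValue_le hγ0 hP0 hgreedy s a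

/-- In-sample soft policy improvement: for a policy `π ⪯ β` with entropy-regularized value
`q̃^π = T^π q̃^π`, the in-sample softmax greedy policy `π'` with respect to `q̃^π` satisfies
`π' ⪯ β`, and its entropy-regularized value `q̃^{π'} = T^{π'} q̃^{π'}` dominates `q̃^π`. -/
theorem insample_soft_policy_improvement {S A : Type*}
    [Fintype S] [Fintype A] [Nonempty S] [Nonempty A]
    (r : S → A → ℝ) (γ : ℝ) (hγ0 : 0 ≤ γ) (hγ1 : γ < 1)
    (P : S → A → S → ℝ) (hP0 : ∀ s a s', 0 ≤ P s a s') (hP1 : ∀ s a, (∑ s', P s a s') = 1)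
    (τ : ℝ) (hτ : 0 < τ)
    (β : S → A → ℝ) (hβ0 : ∀ s a, 0 ≤ β s a) (hβ1 : ∀ s, (∑ a, β s a) = 1)
    (π : S → A → ℝ) (hπ0 : ∀ s a, 0 ≤ π s a) (hπ1 : ∀ s, (∑ a, π s a) = 1)
    (hsub : ∀ s a, 0 < π s a → 0 < β s a)
    (qpi : S → A → ℝ) (hqpi : qpi = Ton r γ τ P π qpi) :
    let pi' : S → A → ℝ := fun s a =>
      if 0 < β s a then
        Real.exp (qpi s a / τ) /
          ∑ a' ∈ Finset.univ.filter (fun a' => 0 < β s a'), Real.exp (qpi s a' / τ)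
      else 0
    (∀ s a, 0 < pi' s a → 0 < β s a) ∧
    (∀ qpi' : S → A → ℝ, qpi' = Ton r γ τ P pi' qpi' →
      ∀ s a, qpi s a ≤ qpi' s a) :=
  insample_soft_policy_improvement_general r γ hγ0 hγ1 P hP0 hP1 τ hτ β π hπ0 hπ1 hsub qpi hqpi
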